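/- arXiv:1109.3441 — 5 statements merged into one kernel-verified Lean document; each statement's English description precedes it below -/
import Mathlib

section
/- If a connected metric space (X,d) satisfies the λ-ALLC condition, then it satisfies the 2λ-LLC condition. -/
open Metric

/-- The open annulus `A(a, r, R) = {y : r < d(a,y) < R}`. -/
def metricAnnulus {X : Type*} [MetricSpace X] (a : X) (r R : ℝ) : Set X :=
  {y | r < dist a y ∧ dist a y < R}

/-- `λ`-ALLC: each pair of distinct points of an annulus `A(a,r,R)` (with `0 ≤ r < R`) lies
in a continuum contained in `A(a, r/λ, λR)`. -/
def IsALLC (X : Type*) [MetricSpace X] (lam : ℝ) : Prop :=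
  ∀ (a : X) (r R : ℝ), 0 ≤ r → r < R →
    ∀ x ∈ metricAnnulus a r R, ∀ y ∈ metricAnnulus a r R, x ≠ y →
      ∃ E : Set X, IsCompact E ∧ IsConnected E ∧ x ∈ E ∧ y ∈ E ∧
        E ⊆ metricAnnulus a (r / lam) (lam * R)

/-- `λ`-LLC: (LLC₁) each pair of distinct points of `B(a,r)` lies in a continuum contained in
`B(a, λr)`, and (LLC₂) each pair of distinct points of `X \ B(a,r)` lies in a continuum
contained in `X \ B(a, r/λ)`. -/
def IsLLC (X : Type*) [MetricSpace X] (lam : ℝ) : Prop :=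
  (∀ (a : X) (r : ℝ), 0 < r → ∀ x ∈ ball a r, ∀ y ∈ ball a r, x ≠ y →
    ∃ E : Set X, IsCompact E ∧ IsConnected E ∧ x ∈ E ∧ y ∈ E ∧ E ⊆ ball a (lam * r)) ∧
  (∀ (a : X) (r : ℝ), 0 < r → ∀ x ∈ (ball a r)ᶜ, ∀ y ∈ (ball a r)ᶜ, x ≠ y →
    ∃ E : Set X, IsCompact E ∧ IsConnected E ∧ x ∈ E ∧ y ∈ E ∧ E ⊆ (ball a (r / lam))ᶜ)

/-- Auxiliary lemma: LLC₁ for a pair consisting of the center `a` and another point. -/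
lemma llc1_center {X : Type*} [MetricSpace X] [ConnectedSpace X]
    (lam : ℝ) (hlam : 1 ≤ lam) (h : IsALLC X lam) (a : X) (r : ℝ) (hr : 0 < r)
    (y : X) (hy : y ∈ ball a r) (hay : a ≠ y) :
    ∃ E : Set X, IsCompact E ∧ IsConnected E ∧ a ∈ E ∧ y ∈ E ∧ E ⊆ ball a (2 * lam * r) := by
  have hd : 0 < dist a y := dist_pos.2 hay
  have hdr : dist a y < r := by rwa [dist_comm, ← mem_ball]
  set t : ℝ := dist a y / 2 with ht
  have htpos : 0 < t := by positivity
  have htr : 2 * t < r := by rw [ht]; linarith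
  -- find a point b with dist a b = t, by the intermediate value theorem
  obtain ⟨b, hb⟩ : ∃ b : X, dist a b = t := by
    have hcont : Continuous fun z : X => dist a z := continuous_const.dist continuous_id
    have := intermediate_value_univ a y hcont
    have hmem : t ∈ Set.Icc (dist a a) (dist a y) := by
      constructor <;> simp [ht] <;> linarith
    exact this hmem
  have key := h b 0 (t + r) le_rfl (by linarith) a ?_ y ?_ hay
  · obtain ⟨E, hEc, hEconn, haE, hyE, hEsub⟩ := key
    refine ⟨E, hEc, hEconn, haE, hyE, fun z hz => ?_⟩
    have hz' := (hEsub hz).2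
    have hzd : dist b z < lam * (t + r) := hz'
    have h1 : dist z a ≤ dist z b + dist b a := dist_triangle z b a
    rw [mem_ball]
    have hba : dist b a = t := by rw [dist_comm]; exact hb
    have hzb : dist z b = dist b z := dist_comm z b
    nlinarith
  · -- a ∈ annulus b 0 (t+r)
    constructor
    · rw [dist_comm]; rw [hb]; exact htpos
    · rw [dist_comm, hb]; linarith
  · -- y ∈ annulus b 0 (t+r)
    have h1 : dist a y ≤ dist a b + dist b y := dist_triangle a b y
    have h2 : dist b y ≤ dist b a + dist a y := dist_triangle b a y
    rw [dist_comm b a, hb] at h2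
    rw [hb] at h1
    constructor
    · show (0:ℝ) < dist b y; linarith [ht ▸ h1]
    · show dist b y < t + r; linarith

/-- A connected metric space satisfying the `λ`-ALLC condition satisfies the `2λ`-LLC
condition. -/
theorem isLLC_of_isALLC {X : Type*} [MetricSpace X] [ConnectedSpace X]
    (lam : ℝ) (hlam : 1 ≤ lam) (h : IsALLC X lam) : IsLLC X (2 * lam) := by
  have hlam0 : 0 < lam := lt_of_lt_of_le one_pos hlam
  constructor
  · -- LLC₁
    intro a r hr x hx y hy hxy
    by_cases hxa : x = a
    · subst hxa
      exact llc1_center lam hlam h x r hr y hy hxy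
    by_cases hya : y = a
    · subst hya
      obtain ⟨E, h1, h2, h3, h4, h5⟩ :=
        llc1_center lam hlam h y r hr x hx (Ne.symm hxy)
      exact ⟨E, h1, h2, h4, h3, h5⟩
    · -- both points differ from the center
      have hx' : x ∈ metricAnnulus a 0 r := by
        constructor
        · exact dist_pos.2 fun e => hxa e.symm
        · rw [dist_comm]; exact mem_ball.1 hx
      have hy' : y ∈ metricAnnulus a 0 r := by
        constructor
        · exact dist_pos.2 fun e => hya e.symm
        · rw [dist_comm]; exact mem_ball.1 hy
      obtain ⟨E, h1, h2, h3, h4, h5⟩ := h a 0 r le_rfl hr x hx' y hy' hxy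
      refine ⟨E, h1, h2, h3, h4, fun z hz => ?_⟩
      have := (h5 hz).2
      rw [mem_ball, dist_comm]
      nlinarith
  · -- LLC₂
    intro a r hr x hx y hy hxy
    have hxd : r ≤ dist a x := by rw [dist_comm]; exact le_of_not_gt (fun c => hx (mem_ball.2 c))
    have hyd : r ≤ dist a y := by rw [dist_comm]; exact le_of_not_gt (fun c => hy (mem_ball.2 c))
    set R : ℝ := max (dist a x) (dist a y) + 1 with hR
    have hx' : x ∈ metricAnnulus a (r / 2) R := by
      constructor
      · linarith
      · have : dist a x ≤ max (dist a x) (dist a y) := le_max_left _ _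
        linarith
    have hy' : y ∈ metricAnnulus a (r / 2) R := by
      constructor
      · linarith
      · have : dist a y ≤ max (dist a x) (dist a y) := le_max_right _ _
        linarith
    obtain ⟨E, h1, h2, h3, h4, h5⟩ := h a (r / 2) R (by positivity)
      (by have := le_max_left (dist a x) (dist a y); linarith) x hx' y hy' hxy
    refine ⟨E, h1, h2, h3, h4, fun z hz => ?_⟩
    have hlow := (h5 hz).1
    intro hmem
    rw [mem_ball, dist_comm] at hmem
    have : r / (2 * lam) = r / 2 / lam := by rw [div_div]
    rw [this] at hmem
    linarith
end

section
/- If f : X → Y is an η-quasisymmetric homeomorphism of metric spaces and E, F are subsets of X with positive diameter, then the relative distance Δ(f(E), f(F)) is bounded above and below by positive quantities depending only on η and Δ(E,F); in particular, Δ(f(E),f(F)) ≤ C whenever Δ(E,F) ≤ c, where C depends only on η and c. -/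
/-- The distance between two subsets of a metric space. -/
noncomputable def setDist {X : Type*} [MetricSpace X] (E F : Set X) : ℝ :=
  sInf {d | ∃ x ∈ E, ∃ y ∈ F, d = dist x y}

/-- The relative distance `Δ(E,F) = dist(E,F) / min (diam E) (diam F)`. -/
noncomputable def relDist {X : Type*} [MetricSpace X] (E F : Set X) : ℝ :=
  setDist E F / min (Metric.diam E) (Metric.diam F)

/-- `η` is a distortion-function: a self-homeomorphism of `[0,∞)`. -/
def IsDistortion (η : ℝ → ℝ) : Prop :=
  ContinuousOn η (Set.Ici 0) ∧ StrictMonoOn η (Set.Ici 0) ∧ η 0 = 0 ∧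
    Set.MapsTo η (Set.Ici 0) (Set.Ici 0) ∧ Set.SurjOn η (Set.Ici 0) (Set.Ici 0)

/-- `f` is `η`-quasisymmetric. -/
def IsQS {X Y : Type*} [MetricSpace X] [MetricSpace Y] (η : ℝ → ℝ) (f : X → Y) : Prop :=
  ∀ x y z : X, x ≠ y → x ≠ z → y ≠ z →
    dist (f x) (f y) / dist (f x) (f z) ≤ η (dist x y / dist x z)

open Metric Bornology

section helpers

variable {X Y : Type*} [MetricSpace X] [MetricSpace Y]

lemma setDist_nonneg' (E F : Set X) : 0 ≤ setDist E F :=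
  Real.sInf_nonneg (by rintro d ⟨x, hx, y, hy, rfl⟩; exact dist_nonneg)

lemma setDist_le' {E F : Set X} {a b : X} (ha : a ∈ E) (hb : b ∈ F) :
    setDist E F ≤ dist a b :=
  csInf_le ⟨0, by rintro d ⟨x, hx, y, hy, rfl⟩; exact dist_nonneg⟩ ⟨a, ha, b, hb, rfl⟩

lemma le_setDist' {E F : Set X} (hE : E.Nonempty) (hF : F.Nonempty) {m : ℝ}
    (h : ∀ a ∈ E, ∀ b ∈ F, m ≤ dist a b) : m ≤ setDist E F := by
  obtain ⟨a, ha⟩ := hE; obtain ⟨b, hb⟩ := hF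
  exact le_csInf ⟨_, a, ha, b, hb, rfl⟩ (by rintro d ⟨x, hx, y, hy, rfl⟩; exact h x hx y hy)

lemma exists_setDist_lt {E F : Set X} (hE : E.Nonempty) (hF : F.Nonempty) {r : ℝ}
    (h : setDist E F < r) : ∃ a ∈ E, ∃ b ∈ F, dist a b < r := by
  obtain ⟨a, ha⟩ := hE; obtain ⟨b, hb⟩ := hF
  unfold setDist at h
  have hne : {d | ∃ x ∈ E, ∃ y ∈ F, d = dist x y}.Nonempty := ⟨dist a b, a, ha, b, hb, rfl⟩
  obtain ⟨d, ⟨x, hx, y, hy, rfl⟩, hd⟩ := exists_lt_of_csInf_lt hne h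
  exact ⟨x, hx, y, hy, hd⟩

lemma exists_pair_dist_gt {E : Set X} (hE : 0 < Metric.diam E) :
    ∃ x ∈ E, ∃ y ∈ E, Metric.diam E / 2 < dist x y := by
  by_contra h
  push_neg at h
  have : Metric.diam E ≤ Metric.diam E / 2 :=
    diam_le_of_forall_dist_le (by linarith) fun x hx y hy => h x hx y hy
  linarith

lemma isBounded_of_diam_pos {E : Set X} (hE : 0 < Metric.diam E) : IsBounded E := by
  rw [Metric.isBounded_iff_ediam_ne_top]
  intro ht
  simp [Metric.diam, ht] at hE

/-- The key pointwise quasisymmetry estimate. -/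
lemma key_est {η : ℝ → ℝ} (hη : IsDistortion η) {f : X → Y} (hf : Function.Injective f)
    (hqs : IsQS η f) {a y b : X} (hab : a ≠ b) {M : ℝ} (hM : 0 ≤ M)
    (hr : dist a y ≤ M * dist a b) :
    dist (f a) (f y) ≤ max 1 (η M) * dist (f a) (f b) := by
  obtain ⟨-, hmono, -, hmaps, -⟩ := hη
  have hab' : 0 < dist a b := dist_pos.mpr hab
  have hfab : 0 < dist (f a) (f b) := dist_pos.mpr fun h => hab (hf h)
  have hK1 : (1 : ℝ) ≤ max 1 (η M) := le_max_left _ _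
  by_cases hay : a = y
  · subst hay
    simp only [dist_self]
    positivity
  by_cases hyb : y = b
  · subst hyb
    nlinarith
  have h1 := hqs a y b hay hab hyb
  have hratio : dist a y / dist a b ≤ M := (div_le_iff₀ hab').mpr hr
  have hrat0 : (0:ℝ) ≤ dist a y / dist a b := by positivity
  have h2 : η (dist a y / dist a b) ≤ η M :=
    hmono.monotoneOn (Set.mem_Ici.mpr hrat0) (Set.mem_Ici.mpr hM) hratio
  have h3 : dist (f a) (f y) ≤ η M * dist (f a) (f b) :=
    (div_le_iff₀ hfab).mp (h1.trans h2)
  have : η M ≤ max 1 (η M) := le_max_right _ _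
  nlinarith

lemma image_bounded_and_diam {f : X → Y} {E : Set X} {a : X} (ha : a ∈ E) {B : ℝ}
    (hB : 0 ≤ B) (h : ∀ y ∈ E, dist (f a) (f y) ≤ B) :
    IsBounded (f '' E) ∧ Metric.diam (f '' E) ≤ 2 * B := by
  constructor
  · refine (isBounded_closedBall (x := f a) (r := B)).subset ?_
    rintro _ ⟨y, hy, rfl⟩
    exact mem_closedBall.mpr (by rw [dist_comm]; exact h y hy)
  · refine diam_le_of_forall_dist_le (by linarith) ?_
    rintro _ ⟨u, hu, rfl⟩ _ ⟨v, hv, rfl⟩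
    calc dist (f u) (f v) ≤ dist (f u) (f a) + dist (f a) (f v) := dist_triangle _ _ _
      _ ≤ B + B := by rw [dist_comm (f u) (f a)]; exact add_le_add (h u hu) (h v hv)
      _ = 2 * B := by ring

lemma diam_image_pos {f : X → Y} (hf : Function.Injective f) {E : Set X}
    (hE : 0 < Metric.diam E) (hb : IsBounded (f '' E)) : 0 < Metric.diam (f '' E) := by
  obtain ⟨x, hx, y, hy, hxy⟩ := exists_pair_dist_gt hE
  have hne : x ≠ y := by
    intro h; subst h; simp at hxy; linarith
  have hfne : f x ≠ f y := fun h => hne (hf h)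
  have h1 : dist (f x) (f y) ≤ Metric.diam (f '' E) :=
    dist_le_diam_of_mem hb ⟨x, hx, rfl⟩ ⟨y, hy, rfl⟩
  have := dist_pos.mpr hfne
  linarith

/-- The key lemma for the lower bound: if `dist(E,F) ≥ c · diam E`, then the image of `E`
is bounded and its diameter is controlled by any single distance `dist (f a) (f b)`. -/
lemma lower_aux {η : ℝ → ℝ} (hη : IsDistortion η) {f : X → Y} (hf : Function.Injective f)
    (hqs : IsQS η f) {E F : Set X} {c : ℝ} (hc : 0 < c)
    (hE : 0 < Metric.diam E) (hF : 0 < Metric.diam F)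
    (hdist : ∀ a ∈ E, ∀ b ∈ F, c * Metric.diam E ≤ dist a b) :
    IsBounded (f '' E) ∧
      ∀ a ∈ E, ∀ b ∈ F,
        Metric.diam (f '' E) ≤ 2 * (max 1 (η c⁻¹) * dist (f a) (f b)) := by
  have hbdE : IsBounded E := isBounded_of_diam_pos hE
  have hKpos : (0:ℝ) < max 1 (η c⁻¹) := lt_of_lt_of_le one_pos (le_max_left _ _)
  have main : ∀ a ∈ E, ∀ b ∈ F, ∀ y ∈ E,
      dist (f a) (f y) ≤ max 1 (η c⁻¹) * dist (f a) (f b) := by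
    intro a ha b hb y hy
    have hcd : c * Metric.diam E ≤ dist a b := hdist a ha b hb
    have hab : a ≠ b := by
      intro h; subst h; rw [dist_self] at hcd; nlinarith
    have hr : dist a y ≤ c⁻¹ * dist a b := by
      have h1 : dist a y ≤ Metric.diam E := dist_le_diam_of_mem hbdE ha hy
      have h2 : Metric.diam E ≤ c⁻¹ * dist a b := by
        rw [le_inv_mul_iff₀ hc]
        linarith
      linarith
    exact key_est hη hf hqs hab (by positivity) hr
  obtain ⟨x, hx, y, hy, -⟩ := exists_pair_dist_gt hE
  obtain ⟨u, hu, v, hv, -⟩ := exists_pair_dist_gt hF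
  constructor
  · exact (image_bounded_and_diam hx (by positivity) (main x hx u hu)).1
  · intro a ha b hb
    exact (image_bounded_and_diam ha (by positivity) (main a ha b hb)).2

end helpers

/-- Quasisymmetric homeomorphisms quasi-preserve relative distances: for an `η`-quasisymmetric
homeomorphism `f` and subsets `E`, `F` of positive diameter, `Δ(f(E), f(F))` is bounded above
and below in terms of `η` and `Δ(E,F)` only; in particular `Δ(f(E),f(F)) ≤ C` whenever
`Δ(E,F) ≤ c`, with `C = C(η, c) > 0`, and symmetrically `Δ(f(E),f(F)) ≥ C' > 0` whenever
`Δ(E,F) ≥ c' > 0`. -/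
theorem relDist_quasi_preserved (η : ℝ → ℝ) (hη : IsDistortion η) (c : ℝ) (hc : 0 < c) :
    ∃ C > (0 : ℝ), ∃ C' > (0 : ℝ),
      ∀ (X Y : Type) [MetricSpace X] [MetricSpace Y] (f : X → Y),
        Function.Bijective f → IsQS η f →
        ∀ E F : Set X, 0 < Metric.diam E → 0 < Metric.diam F →
          (relDist E F ≤ c → relDist (f '' E) (f '' F) ≤ C) ∧
          (c ≤ relDist E F → C' ≤ relDist (f '' E) (f '' F)) := by
  have hKpos : (0:ℝ) < max 1 (η c⁻¹) := lt_of_lt_of_le one_pos (le_max_left _ _)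
  have hCpos : (0:ℝ) < max 1 (η (5 * c)) := lt_of_lt_of_le one_pos (le_max_left _ _)
  refine ⟨max 1 (η (5 * c)), hCpos, (2 * max 1 (η c⁻¹))⁻¹, by positivity, ?_⟩
  intro X Y _ _ f hbij hqs E F hE hF
  have hf : Function.Injective f := hbij.injective
  have hmin : 0 < min (Metric.diam E) (Metric.diam F) := lt_min hE hF
  obtain ⟨xE, hxE, yE, hyE, hxyE⟩ := exists_pair_dist_gt hE
  obtain ⟨xF, hxF, yF, hyF, hxyF⟩ := exists_pair_dist_gt hF
  have hEne : E.Nonempty := ⟨xE, hxE⟩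
  have hFne : F.Nonempty := ⟨xF, hxF⟩
  constructor
  · -- upper bound
    intro hrel
    by_cases him : 0 < min (Metric.diam (f '' E)) (Metric.diam (f '' F))
    swap
    · have h0 : min (Metric.diam (f '' E)) (Metric.diam (f '' F)) = 0 :=
        le_antisymm (not_lt.mp him) (le_min diam_nonneg diam_nonneg)
      unfold relDist
      rw [h0, div_zero]
      exact le_of_lt hCpos
    have hbE : IsBounded (f '' E) :=
      isBounded_of_diam_pos (lt_of_lt_of_le him (min_le_left _ _))
    have hbF : IsBounded (f '' F) :=
      isBounded_of_diam_pos (lt_of_lt_of_le him (min_le_right _ _))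
    have hsd : setDist E F ≤ c * min (Metric.diam E) (Metric.diam F) := by
      unfold relDist at hrel
      exact le_of_eq_of_le (by ring_nf) ((div_le_iff₀ hmin).mp hrel)
    have hlt : setDist E F < 5 / 4 * (c * min (Metric.diam E) (Metric.diam F)) := by
      nlinarith
    obtain ⟨a, ha, b, hb, hdab⟩ := exists_setDist_lt hEne hFne hlt
    by_cases hab : a = b
    · subst hab
      have h1 : setDist (f '' E) (f '' F) ≤ 0 := by
        have := setDist_le' (E := f '' E) (F := f '' F) ⟨a, ha, rfl⟩ ⟨a, hb, rfl⟩
        simpa using this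
      unfold relDist
      have h2 : setDist (f '' E) (f '' F) = 0 := le_antisymm h1 (setDist_nonneg' _ _)
      rw [h2, zero_div]
      exact le_of_lt hCpos
    -- choose a' ∈ E far from a
    have hEa' : ∃ a' ∈ E, Metric.diam E / 4 < dist a a' := by
      rcases le_or_gt (dist a xE) (Metric.diam E / 4) with h1 | h1
      · refine ⟨yE, hyE, ?_⟩
        have := dist_triangle xE a yE
        rw [dist_comm xE a] at this
        linarith
      · exact ⟨xE, hxE, h1⟩
    have hFb' : ∃ b' ∈ F, Metric.diam F / 4 < dist b b' := by
      rcases le_or_gt (dist b xF) (Metric.diam F / 4) with h1 | h1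
      · refine ⟨yF, hyF, ?_⟩
        have := dist_triangle xF b yF
        rw [dist_comm xF b] at this
        linarith
      · exact ⟨xF, hxF, h1⟩
    obtain ⟨a', ha', hda'⟩ := hEa'
    obtain ⟨b', hb', hdb'⟩ := hFb'
    have haa' : a ≠ a' := by
      intro h; rw [h, dist_self] at hda'; linarith
    have hbb' : b ≠ b' := by
      intro h; rw [h, dist_self] at hdb'; linarith
    have hminE : min (Metric.diam E) (Metric.diam F) ≤ Metric.diam E := min_le_left _ _
    have hminF : min (Metric.diam E) (Metric.diam F) ≤ Metric.diam F := min_le_right _ _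
    -- estimate via E
    have hrE : dist a b ≤ 5 * c * dist a a' := by nlinarith
    have h1 : dist (f a) (f b) ≤ max 1 (η (5 * c)) * dist (f a) (f a') :=
      key_est hη hf hqs haa' (by positivity) hrE
    have h1' : dist (f a) (f a') ≤ Metric.diam (f '' E) :=
      dist_le_diam_of_mem hbE ⟨a, ha, rfl⟩ ⟨a', ha', rfl⟩
    have hE1 : setDist (f '' E) (f '' F) ≤ max 1 (η (5 * c)) * Metric.diam (f '' E) := by
      have := setDist_le' (E := f '' E) (F := f '' F) ⟨a, ha, rfl⟩ ⟨b, hb, rfl⟩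
      nlinarith
    -- estimate via F
    have hrF : dist b a ≤ 5 * c * dist b b' := by
      rw [dist_comm]; nlinarith
    have h2 : dist (f b) (f a) ≤ max 1 (η (5 * c)) * dist (f b) (f b') :=
      key_est hη hf hqs hbb' (by positivity) hrF
    have h2' : dist (f b) (f b') ≤ Metric.diam (f '' F) :=
      dist_le_diam_of_mem hbF ⟨b, hb, rfl⟩ ⟨b', hb', rfl⟩
    have hF1 : setDist (f '' E) (f '' F) ≤ max 1 (η (5 * c)) * Metric.diam (f '' F) := by
      have h3 := setDist_le' (E := f '' E) (F := f '' F) ⟨a, ha, rfl⟩ ⟨b, hb, rfl⟩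
      rw [dist_comm (f a) (f b)] at h3
      nlinarith
    unfold relDist
    rw [div_le_iff₀ him]
    rcases min_cases (Metric.diam (f '' E)) (Metric.diam (f '' F)) with ⟨heq, -⟩ | ⟨heq, -⟩ <;>
      rw [heq]
    · exact hE1
    · exact hF1
  · -- lower bound
    intro hrel
    have hsd : c * min (Metric.diam E) (Metric.diam F) ≤ setDist E F := by
      unfold relDist at hrel
      have := (le_div_iff₀ hmin).mp hrel
      linarith
    rcases min_cases (Metric.diam E) (Metric.diam F) with ⟨heq, hle⟩ | ⟨heq, hle⟩
    · -- min = diam E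
      rw [heq] at hsd
      have hdist : ∀ a ∈ E, ∀ b ∈ F, c * Metric.diam E ≤ dist a b := fun a ha b hb =>
        hsd.trans (setDist_le' ha hb)
      have hdist' : ∀ b ∈ F, ∀ a ∈ E,
          (c * Metric.diam E / Metric.diam F) * Metric.diam F ≤ dist b a := by
        intro b hb a ha
        rw [div_mul_cancel₀ _ (ne_of_gt hF), dist_comm]
        exact hdist a ha b hb
      obtain ⟨hbE, hdE⟩ := lower_aux hη hf hqs hc hE hF hdist
      have hc2 : 0 < c * Metric.diam E / Metric.diam F := by positivity
      have hbF : IsBounded (f '' F) := (lower_aux hη hf hqs hc2 hF hE hdist').1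
      have hpE : 0 < Metric.diam (f '' E) := diam_image_pos hf hE hbE
      have hpF : 0 < Metric.diam (f '' F) := diam_image_pos hf hF hbF
      have hmin' : 0 < min (Metric.diam (f '' E)) (Metric.diam (f '' F)) := lt_min hpE hpF
      have hlow : min (Metric.diam (f '' E)) (Metric.diam (f '' F)) / (2 * max 1 (η c⁻¹)) ≤
          setDist (f '' E) (f '' F) := by
        refine le_setDist' (hEne.image f) (hFne.image f) ?_
        rintro _ ⟨u, hu, rfl⟩ _ ⟨v, hv, rfl⟩
        have h1 := hdE u hu v hv
        have h2 : min (Metric.diam (f '' E)) (Metric.diam (f '' F)) ≤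
            Metric.diam (f '' E) := min_le_left _ _
        rw [div_le_iff₀ (by positivity)]
        nlinarith
      unfold relDist
      rw [le_div_iff₀ hmin']
      calc (2 * max 1 (η c⁻¹))⁻¹ * min (Metric.diam (f '' E)) (Metric.diam (f '' F))
          = min (Metric.diam (f '' E)) (Metric.diam (f '' F)) / (2 * max 1 (η c⁻¹)) := by
            rw [div_eq_mul_inv, mul_comm]
        _ ≤ setDist (f '' E) (f '' F) := hlow
    · -- min = diam F
      rw [heq] at hsd
      have hdist : ∀ b ∈ F, ∀ a ∈ E, c * Metric.diam F ≤ dist b a := fun b hb a ha => by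
        rw [dist_comm]; exact hsd.trans (setDist_le' ha hb)
      have hdist' : ∀ a ∈ E, ∀ b ∈ F,
          (c * Metric.diam F / Metric.diam E) * Metric.diam E ≤ dist a b := by
        intro a ha b hb
        rw [div_mul_cancel₀ _ (ne_of_gt hE), dist_comm]
        exact hdist b hb a ha
      obtain ⟨hbF, hdF⟩ := lower_aux hη hf hqs hc hF hE hdist
      have hc2 : 0 < c * Metric.diam F / Metric.diam E := by positivity
      have hbE : IsBounded (f '' E) := (lower_aux hη hf hqs hc2 hE hF hdist').1
      have hpE : 0 < Metric.diam (f '' E) := diam_image_pos hf hE hbE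
      have hpF : 0 < Metric.diam (f '' F) := diam_image_pos hf hF hbF
      have hmin' : 0 < min (Metric.diam (f '' E)) (Metric.diam (f '' F)) := lt_min hpE hpF
      have hlow : min (Metric.diam (f '' E)) (Metric.diam (f '' F)) / (2 * max 1 (η c⁻¹)) ≤
          setDist (f '' E) (f '' F) := by
        refine le_setDist' (hEne.image f) (hFne.image f) ?_
        rintro _ ⟨u, hu, rfl⟩ _ ⟨v, hv, rfl⟩
        have h1 := hdF v hv u hu
        have h2 : min (Metric.diam (f '' E)) (Metric.diam (f '' F)) ≤
            Metric.diam (f '' F) := min_le_right _ _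
        rw [div_le_iff₀ (by positivity), dist_comm]
        nlinarith
      unfold relDist
      rw [le_div_iff₀ hmin']
      calc (2 * max 1 (η c⁻¹))⁻¹ * min (Metric.diam (f '' E)) (Metric.diam (f '' F))
          = min (Metric.diam (f '' E)) (Metric.diam (f '' F)) / (2 * max 1 (η c⁻¹)) := by
            rw [div_eq_mul_inv, mul_comm]
        _ ≤ setDist (f '' E) (f '' F) := hlow
end

section
/- Let X be a locally compact, connected metric space with compact completion satisfying the λ-LLC₁ condition. If E is a connected subset of ∂X and ε > 0, then the set N(E,ε) ∩ X is contained in a connected subset of N(E, 3λε) ∩ X, where neighborhoods N are taken in the completion X̄. -/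
open Metric UniformSpace

/-- `λ`-LLC₁: each pair of distinct points of `B(a,r)` lies in a continuum contained in
`B(a, λr)`. -/
def IsLLC1 (X : Type*) [MetricSpace X] (lam : ℝ) : Prop :=
  ∀ (a : X) (r : ℝ), 0 < r → ∀ x ∈ ball a r, ∀ y ∈ ball a r, x ≠ y →
    ∃ E : Set X, IsCompact E ∧ IsConnected E ∧ x ∈ E ∧ y ∈ E ∧ E ⊆ ball a (lam * r)

/-- A preconnected set in a pseudometric space is `δ`-chained. -/
lemma chain_of_isPreconnected {α : Type*} [PseudoMetricSpace α] {E : Set α}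
    (hE : IsPreconnected E) {δ : ℝ} (hδ : 0 < δ) {e e' : α} (he : e ∈ E) (he' : e' ∈ E) :
    Relation.ReflTransGen (fun a b => a ∈ E ∧ b ∈ E ∧ dist a b < δ) e e' := by
  set R := fun a b : α => a ∈ E ∧ b ∈ E ∧ dist a b < δ with hR
  by_contra hcon
  set S : Set α := {z | z ∈ E ∧ Relation.ReflTransGen R e z} with hS
  have hu : IsOpen (⋃ z ∈ S, ball z δ) :=
    isOpen_biUnion fun _ _ => isOpen_ball
  have hv : IsOpen (⋃ z ∈ E \ S, ball z δ) :=
    isOpen_biUnion fun _ _ => isOpen_ball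
  have hcover : E ⊆ (⋃ z ∈ S, ball z δ) ∪ (⋃ z ∈ E \ S, ball z δ) := by
    intro z hz
    by_cases hzS : z ∈ S
    · exact Or.inl (Set.mem_biUnion hzS (mem_ball_self hδ))
    · exact Or.inr (Set.mem_biUnion ⟨hz, hzS⟩ (mem_ball_self hδ))
  have h1 : (E ∩ ⋃ z ∈ S, ball z δ).Nonempty :=
    ⟨e, he, Set.mem_biUnion ⟨he, Relation.ReflTransGen.refl⟩ (mem_ball_self hδ)⟩
  have h2 : (E ∩ ⋃ z ∈ E \ S, ball z δ).Nonempty := by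
    refine ⟨e', he', Set.mem_biUnion ⟨he', fun hS' => hcon hS'.2⟩ (mem_ball_self hδ)⟩
  obtain ⟨p, hpE, hpuv⟩ := hE _ _ hu hv hcover h1 h2
  obtain ⟨hpu, hpv⟩ := hpuv
  simp only [Set.mem_iUnion, exists_prop] at hpu hpv
  obtain ⟨z, hzS, hpz⟩ := hpu
  obtain ⟨w, hwES, hpw⟩ := hpv
  have hpS : p ∈ S := ⟨hpE, hzS.2.tail ⟨hzS.1, hpE, by simpa [dist_comm] using hpz⟩⟩
  exact hwES.2 ⟨hwES.1, hpS.2.tail ⟨hpE, hwES.1, by simpa [dist_comm] using hpw⟩⟩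

/-- For a locally compact connected metric space `X` with compact completion satisfying the
`λ`-LLC₁ condition: if `E` is a connected subset of the metric boundary `∂X = X̄ \ X` and
`ε > 0`, then `N(E, ε) ∩ X` is contained in a connected subset of `N(E, 3λε) ∩ X`, the
neighborhoods being taken in the completion `X̄`. -/
theorem neighborhood_of_boundary_component_connected
    (X : Type*) [MetricSpace X] [LocallyCompactSpace X] [ConnectedSpace X]
    [CompactSpace (Completion X)] (lam : ℝ) (hlam : 1 ≤ lam) (hLLC : IsLLC1 X lam)
    (E : Set (Completion X)) (hE : IsConnected E)
    (hEbd : E ⊆ (Set.range ((↑) : X → Completion X))ᶜ) (ε : ℝ) (hε : 0 < ε) :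
    ∃ W : Set (Completion X), IsConnected W ∧
      thickening ε E ∩ Set.range ((↑) : X → Completion X) ⊆ W ∧
      W ⊆ thickening (3 * lam * ε) E ∩ Set.range ((↑) : X → Completion X) := by
  have hcoe : Isometry ((↑) : X → Completion X) := Completion.coe_isometry
  have hlam0 : (0 : ℝ) < lam := lt_of_lt_of_le one_pos hlam
  obtain ⟨e₀, he₀⟩ := hE.nonempty
  set δ : ℝ := ε / 2 with hδdef
  have hδ : 0 < δ := half_pos hε
  -- approximation function: each point of the completion has a point of `X` within `δ`
  have happrox : ∀ e : Completion X, ∃ x : X, dist (↑x : Completion X) e < δ := by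
    intro e
    obtain ⟨x, hx⟩ := (Completion.denseRange_coe (α := X)).exists_dist_lt e hδ
    exact ⟨x, by simpa [dist_comm] using hx⟩
  choose a ha using happrox
  -- single LLC step, transported to the completion
  have step : ∀ (x y : X) (r : ℝ), 0 < r → dist x y < r →
      ∃ C : Set (Completion X), IsConnected C ∧ (↑x : Completion X) ∈ C ∧
        (↑y : Completion X) ∈ C ∧ C ⊆ Set.range ((↑) : X → Completion X) ∧
        ∀ z ∈ C, dist z (↑x : Completion X) < lam * r := by
    intro x y r hr hxy
    by_cases hxyeq : x = y
    · subst hxyeq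
      refine ⟨{(↑x : Completion X)}, isConnected_singleton, rfl, rfl,
        by simp [Set.singleton_subset_iff], ?_⟩
      rintro z rfl
      simpa using mul_pos hlam0 hr
    · obtain ⟨F, _, hFconn, hxF, hyF, hFsub⟩ :=
        hLLC x r hr x (mem_ball_self hr) y (by simpa [mem_ball, dist_comm] using hxy)
          hxyeq
      refine ⟨((↑) : X → Completion X) '' F,
        hFconn.image _ hcoe.continuous.continuousOn, ⟨x, hxF, rfl⟩, ⟨y, hyF, rfl⟩,
        Set.image_subset_range _ _, ?_⟩
      rintro z ⟨f, hf, rfl⟩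
      rw [Completion.dist_eq]
      exact mem_ball.1 (hFsub hf)
  -- link between the approximants of two `δ`-close points of `E`
  have link : ∀ e ∈ E, ∀ e' ∈ E, dist e e' < δ →
      ∃ C : Set (Completion X), IsConnected C ∧ (↑(a e) : Completion X) ∈ C ∧
        (↑(a e') : Completion X) ∈ C ∧
        C ⊆ thickening (3 * lam * ε) E ∩ Set.range ((↑) : X → Completion X) := by
    intro e he e' he' hd
    have h3 : dist (a e) (a e') < 3 * δ := by
      rw [← Completion.dist_eq (a e) (a e')]
      calc dist (↑(a e) : Completion X) (↑(a e'))
          ≤ dist (↑(a e) : Completion X) e + dist e e' + dist e' (↑(a e')) :=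
            dist_triangle4 _ _ _ _
        _ < δ + δ + δ := by
            have h1 := ha e
            have h2 : dist e' (↑(a e') : Completion X) < δ := by
              simpa [dist_comm] using ha e'
            linarith
        _ = 3 * δ := by ring
    obtain ⟨C, hC, hx, hy, hrange, hball⟩ := step (a e) (a e') (3 * δ) (by linarith) h3
    refine ⟨C, hC, hx, hy, fun z hz => ⟨?_, hrange hz⟩⟩
    rw [mem_thickening_iff]
    refine ⟨e, he, ?_⟩
    calc dist z e ≤ dist z (↑(a e) : Completion X) + dist (↑(a e) : Completion X) e :=
          dist_triangle _ _ _
      _ < lam * (3 * δ) + δ := add_lt_add (hball z hz) (ha e)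
      _ ≤ 3 * lam * ε := by rw [hδdef]; nlinarith
  -- connect the approximants along a chain in `E`
  have connect_chain : ∀ e e' : Completion X,
      Relation.ReflTransGen (fun a b => a ∈ E ∧ b ∈ E ∧ dist a b < δ) e e' → e ∈ E →
      ∃ C : Set (Completion X), IsConnected C ∧ (↑(a e) : Completion X) ∈ C ∧
        (↑(a e') : Completion X) ∈ C ∧
        C ⊆ thickening (3 * lam * ε) E ∩ Set.range ((↑) : X → Completion X) := by
    intro e e' h he
    induction h with
    | refl =>
        refine ⟨{(↑(a e) : Completion X)}, isConnected_singleton, rfl, rfl, ?_⟩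
        rintro z rfl
        refine ⟨mem_thickening_iff.2 ⟨e, he, ?_⟩, Set.mem_range_self _⟩
        calc dist (↑(a e) : Completion X) e < δ := ha e
          _ ≤ 3 * lam * ε := by rw [hδdef]; nlinarith
    | @tail b c hb hbc ih =>
        obtain ⟨C, hC, hxC, hbC, hCsub⟩ := ih
        obtain ⟨D, hD, hbD, hcD, hDsub⟩ := link b hbc.1 c hbc.2.1 hbc.2.2
        refine ⟨C ∪ D, hC.union ⟨(↑(a b) : Completion X), hbC, hbD⟩ hD,
          Or.inl hxC, Or.inr hcD, Set.union_subset hCsub hDsub⟩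
  -- connect a point of the `ε`-neighborhood to the approximant of a nearby boundary point
  have connector : ∀ (x : X) (e : Completion X), e ∈ E → dist (↑x : Completion X) e < ε →
      ∃ C : Set (Completion X), IsConnected C ∧ (↑x : Completion X) ∈ C ∧
        (↑(a e) : Completion X) ∈ C ∧
        C ⊆ thickening (3 * lam * ε) E ∩ Set.range ((↑) : X → Completion X) := by
    intro x e he hxe
    have hxa : dist x (a e) < ε + δ := by
      rw [← Completion.dist_eq x (a e)]
      calc dist (↑x : Completion X) (↑(a e))
          ≤ dist (↑x : Completion X) e + dist e (↑(a e)) := dist_triangle _ _ _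
        _ < ε + δ := add_lt_add hxe (by simpa [dist_comm] using ha e)
    obtain ⟨C, hC, hxC, haC, hrange, hball⟩ := step x (a e) (ε + δ) (by linarith) hxa
    refine ⟨C, hC, hxC, haC, fun z hz => ⟨?_, hrange hz⟩⟩
    rw [mem_thickening_iff]
    refine ⟨e, he, ?_⟩
    calc dist z e ≤ dist z (↑x : Completion X) + dist (↑x : Completion X) e :=
          dist_triangle _ _ _
      _ < lam * (ε + δ) + ε := add_lt_add (hball z hz) hxe
      _ ≤ 3 * lam * ε := by rw [hδdef]; nlinarith
  -- the `ε`-neighborhood of `E` within `X` is nonempty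
  obtain ⟨p₀, hp₀thick, x₀, hx₀⟩ :
      ∃ p, p ∈ thickening ε E ∧ ∃ x : X, (↑x : Completion X) = p := by
    have he₀' : e₀ ∈ thickening ε E := self_subset_thickening hε E he₀
    obtain ⟨x, hx⟩ := (Completion.denseRange_coe (α := X)).exists_mem_open
      isOpen_thickening ⟨e₀, he₀'⟩
    exact ⟨_, hx, x, rfl⟩
  subst hx₀
  have hx₀mem : (↑x₀ : Completion X) ∈
      thickening ε E ∩ Set.range ((↑) : X → Completion X) :=
    ⟨hp₀thick, Set.mem_range_self _⟩
  -- any point of the `ε`-neighborhood can be connected to `x₀`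
  have pair : ∀ p ∈ thickening ε E ∩ Set.range ((↑) : X → Completion X),
      ∃ C : Set (Completion X), IsConnected C ∧ (↑x₀ : Completion X) ∈ C ∧ p ∈ C ∧
        C ⊆ thickening (3 * lam * ε) E ∩ Set.range ((↑) : X → Completion X) := by
    rintro p ⟨hpthick, y, rfl⟩
    obtain ⟨e₁, he₁, hd₁⟩ := mem_thickening_iff.1 hp₀thick
    obtain ⟨e₂, he₂, hd₂⟩ := mem_thickening_iff.1 hpthick
    obtain ⟨C₁, hC₁, hx₀C₁, ha₁C₁, hC₁sub⟩ := connector x₀ e₁ he₁ hd₁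
    obtain ⟨C₂, hC₂, hyC₂, ha₂C₂, hC₂sub⟩ := connector y e₂ he₂ hd₂
    have hchain := chain_of_isPreconnected hE.isPreconnected hδ he₁ he₂
    obtain ⟨Cm, hCm, ha₁Cm, ha₂Cm, hCmsub⟩ := connect_chain e₁ e₂ hchain he₁
    refine ⟨(C₁ ∪ Cm) ∪ C₂, ?_, Or.inl (Or.inl hx₀C₁), Or.inr hyC₂, ?_⟩
    · refine IsConnected.union ⟨(↑(a e₂) : Completion X), Or.inr ha₂Cm, ha₂C₂⟩ ?_ hC₂
      exact hC₁.union ⟨(↑(a e₁) : Completion X), ha₁C₁, ha₁Cm⟩ hCm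
    · exact Set.union_subset (Set.union_subset hC₁sub hCmsub) hC₂sub
  choose! C hCconn hCx₀ hCmem hCsub using pair
  refine ⟨⋃ p ∈ thickening ε E ∩ Set.range ((↑) : X → Completion X), C p, ⟨?_, ?_⟩, ?_, ?_⟩
  · exact ⟨(↑x₀ : Completion X), Set.mem_biUnion hx₀mem (hCmem _ hx₀mem)⟩
  · rw [← Set.sUnion_image]
    refine isPreconnected_sUnion (↑x₀ : Completion X) _ ?_ ?_
    · rintro s ⟨p, hp, rfl⟩
      exact hCx₀ p hp
    · rintro s ⟨p, hp, rfl⟩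
      exact (hCconn p hp).isPreconnected
  · intro p hp
    exact Set.mem_biUnion hp (hCmem p hp)
  · exact Set.iUnion₂_subset fun p hp => hCsub p hp
end

section
/- Let X be a locally compact, connected metric space with compact completion satisfying the LLC₁ condition. If Cauchy sequences {x_i} and {y_i} in X converge to points x, y lying in the same connected component of the metric boundary ∂X, then {x_i} and {y_i} are in U(X) and represent the same end of X. -/
open Metric UniformSpace Filter Topology

/-- `U(Y)`: sequences eventually contained in a connected subset of the complement of any
compact set. -/
def InU (Y : Type*) [TopologicalSpace Y] (s : ℕ → Y) : Prop :=
  ∀ K : Set Y, IsCompact K → ∃ N : ℕ, ∃ U : Set Y, IsConnected U ∧ Disjoint U K ∧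
    ∀ n ≥ N, s n ∈ U

/-- The interleaving of two sequences. -/
def interleave {Y : Type*} (s t : ℕ → Y) : ℕ → Y :=
  fun n => if n % 2 = 0 then s (n / 2) else t (n / 2)

lemma aux_isOpen_range_completion (X : Type*) [MetricSpace X] [LocallyCompactSpace X] :
    IsOpen (Set.range ((↑) : X → Completion X)) := by
  rw [isOpen_iff_mem_nhds]
  rintro _ ⟨x, rfl⟩
  obtain ⟨V, hVc, hVnhds⟩ := exists_compact_mem_nhds x
  have hemb : Topology.IsEmbedding ((↑) : X → Completion X) :=
    (Completion.coe_isometry).isEmbedding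
  have hmap : Filter.map ((↑) : X → Completion X) (𝓝 x)
      = 𝓝[Set.range ((↑) : X → Completion X)] ((x : Completion X)) := hemb.map_nhds_eq x
  have h1 : ((↑) : X → Completion X) '' V ∈
      𝓝[Set.range ((↑) : X → Completion X)] ((x : Completion X)) := by
    rw [← hmap]; exact Filter.image_mem_map hVnhds
  obtain ⟨U', hU'open, hxU', hsub⟩ := mem_nhdsWithin.1 h1
  refine mem_nhds_iff.2 ⟨U', ?_, hU'open, hxU'⟩
  intro z hz
  have hdense : Dense (Set.range ((↑) : X → Completion X)) := Completion.denseRange_coe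
  have hz1 : z ∈ closure (U' ∩ Set.range ((↑) : X → Completion X)) :=
    hdense.open_subset_closure_inter hU'open hz
  have himg : IsClosed (((↑) : X → Completion X) '' V) :=
    (hVc.image (Completion.continuous_coe X)).isClosed
  have hz2 : z ∈ ((↑) : X → Completion X) '' V :=
    himg.closure_subset ((closure_mono hsub) hz1)
  exact Set.image_subset_range _ _ hz2


/-- Let `X` be a locally compact connected metric space with compact completion satisfying
the `λ`-LLC₁ condition.  If Cauchy sequences `s`, `t` in `X` converge (in the completion) to
points `p`, `q` lying in the same connected component of the metric boundary `∂X`, then `s`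
and `t` are in `U(X)` and represent the same end (their interleaving is in `U(X)`). -/
theorem cauchy_sequences_to_same_boundary_component_same_end
    (X : Type*) [MetricSpace X] [LocallyCompactSpace X] [ConnectedSpace X]
    [CompactSpace (Completion X)] (lam : ℝ) (hlam : 1 ≤ lam) (hLLC : IsLLC1 X lam)
    (s t : ℕ → X) (p q : Completion X)
    (hs : Tendsto (fun n => ((s n : Completion X))) atTop (𝓝 p))
    (ht : Tendsto (fun n => ((t n : Completion X))) atTop (𝓝 q))
    (hp : p ∈ (Set.range ((↑) : X → Completion X))ᶜ)
    (hq : q ∈ connectedComponentIn (Set.range ((↑) : X → Completion X))ᶜ p) :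
    InU X s ∧ InU X t ∧ InU X (interleave s t) := by
  have hlam0 : (0:ℝ) < lam := lt_of_lt_of_le one_pos hlam
  set bd : Set (Completion X) := (Set.range ((↑) : X → Completion X))ᶜ with hbd
  set S : Set (Completion X) := closure (connectedComponentIn bd p) with hSdef
  have hSpre : IsPreconnected S :=
    (isPreconnected_connectedComponentIn).closure
  have hSsub : S ⊆ bd :=
    closure_minimal (connectedComponentIn_subset _ _)
      (aux_isOpen_range_completion X).isClosed_compl
  have hpS : p ∈ S := subset_closure (mem_connectedComponentIn hp)
  have hqS : q ∈ S := subset_closure hq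
  -- main construction
  have main : ∀ K : Set X, IsCompact K → ∃ N : ℕ, ∃ W : Set X, IsConnected W ∧
      Disjoint W K ∧ (∀ n ≥ N, s n ∈ W) ∧ (∀ n ≥ N, t n ∈ W) := by
    intro K hK
    -- positive distance from S to K
    obtain ⟨d, hd0, hdK⟩ : ∃ d, 0 < d ∧ ∀ c' ∈ S, ∀ k ∈ K, d ≤ dist c' ((k : X) : Completion X) := by
      rcases K.eq_empty_or_nonempty with rfl | hKne
      · exact ⟨1, one_pos, by simp⟩
      · set K' : Set (Completion X) := ((↑) : X → Completion X) '' K with hK'def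
        have hK'c : IsCompact K' := hK.image (Completion.continuous_coe X)
        have hK'ne : K'.Nonempty := hKne.image _
        have hScomp : IsCompact S := isClosed_closure.isCompact
        obtain ⟨c₀, hc₀S, hmin⟩ := hScomp.exists_isMinOn ⟨p, hpS⟩
          (continuous_infDist_pt K').continuousOn
        have hc₀note : c₀ ∉ K' := by
          intro hc
          exact (hSsub hc₀S) (Set.image_subset_range _ _ hc)
        have hd0 : 0 < infDist c₀ K' :=
          (hK'c.isClosed.notMem_iff_infDist_pos hK'ne).1 hc₀note
        refine ⟨infDist c₀ K', hd0, fun c' hc' k hk => ?_⟩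
        exact le_trans (hmin hc') (infDist_le_dist_of_mem (Set.mem_image_of_mem _ hk))
    set ε : ℝ := d / (8 * lam) with hεdef
    have hε0 : 0 < ε := by positivity
    have hεd8 : ε ≤ d / 8 := by
      rw [hεdef, div_le_div_iff₀ (by positivity) (by norm_num)]
      nlinarith
    have hlam4 : lam * (4 * ε) = d / 2 := by
      rw [hεdef]; field_simp; ring
    -- points of X close to S are not in K
    have notK : ∀ (z : X), ∀ c' ∈ S, dist ((z : X) : Completion X) c' < d → z ∉ K := by
      intro z c' hc' hlt hzK
      have := hdK c' hc' z hzK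
      rw [dist_comm] at this
      linarith
    -- joining lemma
    have join : ∀ c' ∈ S, ∀ x y : X, dist ((x : X) : Completion X) c' < 2 * ε →
        dist ((y : X) : Completion X) c' < 2 * ε →
        ∃ E : Set X, IsConnected E ∧ Disjoint E K ∧ x ∈ E ∧ y ∈ E := by
      intro c' hc' x y hx hy
      rcases eq_or_ne x y with rfl | hxy
      · refine ⟨{x}, isConnected_singleton, ?_, rfl, rfl⟩
        rw [Set.disjoint_singleton_left]
        exact notK x c' hc' (by linarith)
      · have hxy' : dist x y < 4 * ε := by
          have h1 : dist ((x : X) : Completion X) ((y : X) : Completion X) ≤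
              dist ((x : X) : Completion X) c' + dist ((y : X) : Completion X) c' :=
            dist_triangle_right _ _ _
          rw [Completion.dist_eq] at h1
          linarith
        obtain ⟨E, -, hEconn, hxE, hyE, hEsub⟩ := hLLC x (4 * ε) (by positivity) x
          (mem_ball_self (by positivity)) y (mem_ball.2 (by rw [dist_comm]; exact hxy')) hxy
        refine ⟨E, hEconn, Set.disjoint_left.2 fun z hzE => ?_, hxE, hyE⟩
        have hzb : dist z x < lam * (4 * ε) := mem_ball.1 (hEsub hzE)
        have h2 : dist ((z : X) : Completion X) c' ≤
            dist ((z : X) : Completion X) ((x : X) : Completion X) +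
            dist ((x : X) : Completion X) c' := dist_triangle _ _ _
        rw [Completion.dist_eq] at h2
        exact notK z c' hc' (by rw [hlam4] at hzb; linarith) 
    -- chain connectedness of S
    have chain : ∀ c' ∈ S,
        Relation.ReflTransGen (fun a b : Completion X => b ∈ S ∧ dist a b < ε) p c' := by
      set R := fun a b : Completion X => b ∈ S ∧ dist a b < ε with hRdef
      set T : Set (Completion X) := {z | Relation.ReflTransGen R p z} with hTdef
      intro c' hc'
      by_contra hnc
      set u : Set (Completion X) := ⋃ a ∈ S ∩ T, ball a ε with hudef
      set v : Set (Completion X) := ⋃ a ∈ S \ T, ball a ε with hvdef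
      have hu : IsOpen u := isOpen_biUnion fun _ _ => isOpen_ball
      have hv : IsOpen v := isOpen_biUnion fun _ _ => isOpen_ball
      have hcover : S ⊆ u ∪ v := by
        intro z hz
        by_cases hzT : z ∈ T
        · exact Or.inl (Set.mem_biUnion ⟨hz, hzT⟩ (mem_ball_self hε0))
        · exact Or.inr (Set.mem_biUnion ⟨hz, hzT⟩ (mem_ball_self hε0))
      have hne1 : (S ∩ u).Nonempty :=
        ⟨p, hpS, Set.mem_biUnion ⟨hpS, Relation.ReflTransGen.refl⟩ (mem_ball_self hε0)⟩
      have hne2 : (S ∩ v).Nonempty :=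
        ⟨c', hc', Set.mem_biUnion ⟨hc', hnc⟩ (mem_ball_self hε0)⟩
      obtain ⟨z, hzS, hzu, hzv⟩ := hSpre u v hu hv hcover hne1 hne2
      obtain ⟨a, ha, hza⟩ := Set.mem_iUnion₂.1 hzu
      obtain ⟨b, hb, hzb⟩ := Set.mem_iUnion₂.1 hzv
      have hzT : z ∈ T :=
        Relation.ReflTransGen.tail ha.2 ⟨hzS, by rw [dist_comm]; exact mem_ball.1 hza⟩
      have hbT : b ∈ T :=
        Relation.ReflTransGen.tail hzT ⟨hb.1, mem_ball.1 hzb⟩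
      exact hb.2 hbT
    -- reach lemma: build connected set from near p to near any c' ∈ S
    have reach : ∀ c' ∈ S, ∀ x₀ : X, dist ((x₀ : X) : Completion X) p < ε →
        ∃ U : Set X, IsConnected U ∧ Disjoint U K ∧ x₀ ∈ U ∧
          ∃ x ∈ U, dist ((x : X) : Completion X) c' < ε := by
      intro c' hc' x₀ hx₀
      have h := chain c' hc'
      clear hc'
      induction h with
      | refl =>
        refine ⟨{x₀}, isConnected_singleton, ?_, rfl, x₀, rfl, hx₀⟩
        rw [Set.disjoint_singleton_left]
        exact notK x₀ p hpS (by linarith)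
      | @tail b c hpb hbc ih =>
        obtain ⟨U, hUconn, hUK, hx₀U, x, hxU, hxb⟩ := ih
        obtain ⟨hcS, hbc'⟩ := hbc
        obtain ⟨x', hx'⟩ := Completion.denseRange_coe.exists_dist_lt c hε0
        rw [dist_comm] at hx'
        have hxc : dist ((x : X) : Completion X) c < 2 * ε := by
          have := dist_triangle ((x : X) : Completion X) b c
          linarith
        obtain ⟨E, hEconn, hEK, hxE, hx'E⟩ := join c hcS x x' hxc (by linarith)
        exact ⟨U ∪ E, hUconn.union ⟨x, hxU, hxE⟩ hEconn,
          Set.disjoint_union_left.2 ⟨hUK, hEK⟩, Or.inl hx₀U, x', Or.inr hx'E, hx'⟩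
    -- tails of s and t
    obtain ⟨Ns, hNs⟩ : ∃ N, ∀ n ≥ N, dist ((s n : X) : Completion X) p < ε :=
      eventually_atTop.1 ((Metric.tendsto_nhds.1 hs) ε hε0)
    obtain ⟨Nt, hNt⟩ : ∃ N, ∀ n ≥ N, dist ((t n : X) : Completion X) q < ε :=
      eventually_atTop.1 ((Metric.tendsto_nhds.1 ht) ε hε0)
    obtain ⟨U, hUconn, hUK, hx₀U, x, hxU, hxq⟩ := reach q hqS (s Ns) (hNs Ns le_rfl)
    have hEs : ∀ n : ℕ, ∃ E : Set X, IsConnected E ∧ Disjoint E K ∧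
        s Ns ∈ E ∧ s (Ns + n) ∈ E := fun n =>
      join p hpS (s Ns) (s (Ns + n)) (by have := hNs Ns le_rfl; linarith)
        (by have := hNs (Ns + n) (Nat.le_add_right _ _); linarith)
    choose Es hEsc hEsK hEs1 hEs2 using hEs
    have hEt : ∀ n : ℕ, ∃ E : Set X, IsConnected E ∧ Disjoint E K ∧
        x ∈ E ∧ t (Nt + n) ∈ E := fun n =>
      join q hqS x (t (Nt + n)) (by linarith)
        (by have := hNt (Nt + n) (Nat.le_add_right _ _); linarith)
    choose Et hEtc hEtK hEt1 hEt2 using hEt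
    set W : Set X := ⋃ n : ℕ, (U ∪ Es n ∪ Et n) with hWdef
    have hWn : ∀ n : ℕ, IsConnected (U ∪ Es n ∪ Et n) := fun n =>
      ((hUconn.union ⟨s Ns, hx₀U, hEs1 n⟩ (hEsc n)).union
        ⟨x, Or.inl hxU, hEt1 n⟩ (hEtc n))
    have hWconn : IsConnected W := by
      refine ⟨⟨s Ns, Set.mem_iUnion.2 ⟨0, Or.inl (Or.inl hx₀U)⟩⟩, ?_⟩
      exact isPreconnected_iUnion ⟨s Ns, Set.mem_iInter.2 fun n => Or.inl (Or.inl hx₀U)⟩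
        fun n => (hWn n).isPreconnected
    have hWK : Disjoint W K := by
      rw [hWdef, Set.disjoint_iUnion_left]
      intro n
      rw [Set.disjoint_union_left, Set.disjoint_union_left]
      exact ⟨⟨hUK, hEsK n⟩, hEtK n⟩
    refine ⟨max Ns Nt, W, hWconn, hWK, fun n hn => ?_, fun n hn => ?_⟩
    · have h1 : Ns + (n - Ns) = n := by omega
      have h2 := hEs2 (n - Ns)
      rw [h1] at h2
      exact Set.mem_iUnion.2 ⟨n - Ns, Or.inl (Or.inr h2)⟩
    · have h1 : Nt + (n - Nt) = n := by omega
      have h2 := hEt2 (n - Nt)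
      rw [h1] at h2
      exact Set.mem_iUnion.2 ⟨n - Nt, Or.inr h2⟩
  refine ⟨fun K hK => ?_, fun K hK => ?_, fun K hK => ?_⟩
  · obtain ⟨N, W, h1, h2, h3, _⟩ := main K hK
    exact ⟨N, W, h1, h2, h3⟩
  · obtain ⟨N, W, h1, h2, _, h4⟩ := main K hK
    exact ⟨N, W, h1, h2, h4⟩
  · obtain ⟨N, W, h1, h2, h3, h4⟩ := main K hK
    refine ⟨2 * N, W, h1, h2, fun n hn => ?_⟩
    unfold interleave
    split
    · exact h3 _ (by omega)
    · exact h4 _ (by omega)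
end

section
/- In the glued metric space (Z,d) from the bi-Lipschitz gluing construction: if r > 0 and a ∈ Z satisfies dist_d(a, π(∪_{i∈I} E_i)) ≥ 3r, then every b ∈ B_d(a,r) has a unique representative z_b in the disjoint union, and the map b ↦ z_b is a bijective isometry from B_d(a,r) onto B_{d̃}(z_a, r). -/
open scoped ENNReal

section Gluing

variable {I : Type*} (X : Option I → Type*) [∀ i, MetricSpace (X i)]

open Classical in
/-- The distance on the disjoint union `Σ i, X i`: the distance of the piece within a piece,
and `∞` across different pieces. -/
noncomputable def dtilde : (Σ i, X i) → (Σ i, X i) → ℝ≥0∞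
  | ⟨i, x⟩, ⟨j, y⟩ => if h : i = j then edist (h ▸ x) y else ⊤

/-- The gluing relation: `x ∈ E i ⊆ X₀` is identified with `f i x ∈ X i`. -/
def glueRel (E : I → Set (X none)) (f : ∀ i, E i → X (some i)) :
    (Σ i, X i) → (Σ i, X i) → Prop :=
  fun a b => ∃ (i : I) (x : X none) (hx : x ∈ E i),
    a = ⟨none, x⟩ ∧ b = ⟨some i, f i ⟨x, hx⟩⟩

/-- The chain distance on the glued space `Z`. -/
noncomputable def chainDist (E : I → Set (X none)) (f : ∀ i, E i → X (some i))
    (a b : Quot (glueRel X E f)) : ℝ≥0∞ :=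
  sInf {S : ℝ≥0∞ | ∃ (n : ℕ) (z z' : Fin (n + 1) → Σ i, X i),
    Quot.mk (glueRel X E f) (z 0) = a ∧
    Quot.mk (glueRel X E f) (z' (Fin.last n)) = b ∧
    (∀ k : Fin n, Quot.mk (glueRel X E f) (z' k.castSucc) =
      Quot.mk (glueRel X E f) (z k.succ)) ∧
    S = ∑ k : Fin (n + 1), dtilde X (z k) (z' k)}

end Gluing

/-!
Away from the gluing image `π(⋃ E i)` every point of `Z` has a unique representative, since the
gluing relation only identifies points of `⋃ E i` with their images. A chain starting in the
ball `B_d(a, r)` either never jumps between representatives, and is then no shorter than the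
`d̃`-distance of the representatives of its endpoints, or it reaches the gluing image, which lies
at distance `≥ 3r` from `a`, so its length is at least `2r`. Hence `d = d̃` on pairs of points of
the ball whose representatives are `d̃`-closer than `2r`, which the triangle inequality through
`z_a` guarantees.
-/

section DisjointUnionDistance

variable {I : Type*} {X : Option I → Type*} [∀ i, MetricSpace (X i)]

theorem dtilde_mk {i : Option I} (x y : X i) : dtilde X ⟨i, x⟩ ⟨i, y⟩ = edist x y := by
  simp [dtilde]

theorem dtilde_of_ne {i j : Option I} (h : i ≠ j) (x : X i) (y : X j) :
    dtilde X ⟨i, x⟩ ⟨j, y⟩ = ⊤ :=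
  dif_neg h

theorem dtilde_self (p : Σ i, X i) : dtilde X p p = 0 := by
  obtain ⟨i, x⟩ := p
  simp [dtilde_mk]

theorem dtilde_comm (p q : Σ i, X i) : dtilde X p q = dtilde X q p := by
  obtain ⟨i, x⟩ := p
  obtain ⟨j, y⟩ := q
  by_cases h : i = j
  · subst h
    rw [dtilde_mk, dtilde_mk, edist_comm]
  · rw [dtilde_of_ne h, dtilde_of_ne (Ne.symm h)]

theorem dtilde_triangle (p q s : Σ i, X i) :
    dtilde X p s ≤ dtilde X p q + dtilde X q s := by
  obtain ⟨i, x⟩ := p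
  obtain ⟨j, y⟩ := q
  obtain ⟨k, w⟩ := s
  by_cases hij : i = j
  · subst hij
    by_cases hik : i = k
    · subst hik
      simpa only [dtilde_mk] using edist_triangle x y w
    · simp [dtilde_of_ne hik]
  · simp [dtilde_of_ne hij]

end DisjointUnionDistance

section GluedSpace

variable {I : Type*} (X : Option I → Type*) (E : I → Set (X none)) (f : ∀ i, E i → X (some i))

local notation "π" => Quot.mk (glueRel X E f)

def gluingImage : Set (Quot (glueRel X E f)) :=
  {p | ∃ i, ∃ x ∈ E i, π ⟨none, x⟩ = p}

variable {X E f}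

theorem eq_or_mem_gluingImage_of_mk_eq_mk {w w' : Σ i, X i} (h : π w = π w') :
    w = w' ∨ π w ∈ gluingImage X E f := by
  have hgen := Quot.eqvGen_exact h
  clear h
  induction hgen with
  | rel _ _ hrel =>
    obtain ⟨i, x, hx, rfl, -⟩ := hrel
    exact Or.inr ⟨i, x, hx, rfl⟩
  | refl => exact Or.inl rfl
  | symm u v huv ih =>
    rcases ih with rfl | hu
    · exact Or.inl rfl
    · exact Or.inr (Quot.eqvGen_sound huv ▸ hu)
  | trans u v _ _ _ ih₁ ih₂ =>
    rcases ih₁ with rfl | hu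
    · exact ih₂
    · exact Or.inr hu

theorem eq_of_mk_eq_mk_of_notMem {w x : Σ i, X i} (hx : π x ∉ gluingImage X E f)
    (h : π w = π x) : w = x :=
  (eq_or_mem_gluingImage_of_mk_eq_mk h).resolve_right (h ▸ hx)

theorem mk_succ_castSucc_eq_mk_succ_succ {n : ℕ} {z z' : Fin (n + 2) → Σ i, X i}
    (hjump : ∀ k : Fin (n + 1), π (z' k.castSucc) = π (z k.succ)) (k : Fin n) :
    π (z' k.castSucc.succ) = π (z k.succ.succ) := by
  simpa only [Fin.succ_castSucc] using hjump k.succ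

variable [∀ i, MetricSpace (X i)]

theorem chainDist_le_dtilde (p q : Σ i, X i) : chainDist X E f (π p) (π q) ≤ dtilde X p q :=
  sInf_le ⟨0, fun _ => p, fun _ => q, rfl, rfl, Fin.elim0, by simp⟩

theorem chainDist_self (p : Quot (glueRel X E f)) : chainDist X E f p p = 0 := by
  obtain ⟨w, rfl⟩ := Quot.exists_rep p
  exact le_antisymm ((chainDist_le_dtilde w w).trans_eq (dtilde_self w)) bot_le

theorem chainDist_mk_le_dtilde_add (x x' : Σ i, X i) (s : Quot (glueRel X E f)) :
    chainDist X E f (π x) s ≤ dtilde X x x' + chainDist X E f (π x') s := by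
  conv_rhs => rw [add_comm, chainDist, ENNReal.sInf_add]
  refine le_iInf₂ ?_
  rintro _ ⟨n, z, z', hz, hz', hjump, rfl⟩
  refine sInf_le ⟨n + 1, Fin.cons x z, Fin.cons x' z', rfl, ?_, ?_, ?_⟩
  · simpa [← Fin.succ_last] using hz'
  · refine Fin.cases ?_ fun k => ?_
    · simpa using hz.symm
    · simpa [← Fin.succ_castSucc] using hjump k
  · simp [Fin.sum_univ_succ, add_comm]

theorem chainDist_le_sum_add {n : ℕ} {z z' : Fin (n + 1) → Σ i, X i}
    (hjump : ∀ k : Fin n, π (z' k.castSucc) = π (z k.succ)) (s : Quot (glueRel X E f)) :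
    chainDist X E f (π (z 0)) s ≤
      (∑ k, dtilde X (z k) (z' k)) + chainDist X E f (π (z' (Fin.last n))) s := by
  induction n with
  | zero => simpa using chainDist_mk_le_dtilde_add (z 0) (z' 0) s
  | succ n ih =>
    have htail := ih (z := fun k => z k.succ) (z' := fun k => z' k.succ)
      (mk_succ_castSucc_eq_mk_succ_succ hjump)
    have hhead : π (z' 0) = π (z (Fin.succ 0)) := hjump 0
    calc chainDist X E f (π (z 0)) s
        ≤ dtilde X (z 0) (z' 0) + chainDist X E f (π (z (Fin.succ 0))) s := by
          rw [← hhead]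
          exact chainDist_mk_le_dtilde_add (z 0) (z' 0) s
      _ ≤ dtilde X (z 0) (z' 0) + ((∑ k : Fin (n + 1), dtilde X (z k.succ) (z' k.succ)) +
          chainDist X E f (π (z' (Fin.last n).succ)) s) := by gcongr
      _ = _ := by
          rw [Fin.sum_univ_succ (f := fun k => dtilde X (z k) (z' k))]
          exact (add_assoc _ _ _).symm

theorem chainDist_triangle (p q s : Quot (glueRel X E f)) :
    chainDist X E f p s ≤ chainDist X E f p q + chainDist X E f q s := by
  conv_rhs => rw [chainDist, ENNReal.sInf_add]
  refine le_iInf₂ ?_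
  rintro _ ⟨n, z, z', rfl, rfl, hjump, rfl⟩
  exact chainDist_le_sum_add hjump s

theorem dtilde_le_sum_or_exists_gluingImage {n : ℕ} {z z' : Fin (n + 1) → Σ i, X i}
    (hjump : ∀ k : Fin n, π (z' k.castSucc) = π (z k.succ)) :
    dtilde X (z 0) (z' (Fin.last n)) ≤ ∑ k, dtilde X (z k) (z' k) ∨
      ∃ g ∈ gluingImage X E f, chainDist X E f (π (z 0)) g ≤ ∑ k, dtilde X (z k) (z' k) := by
  induction n with
  | zero => simp
  | succ n ih =>
    have htail := ih (z := fun k => z k.succ) (z' := fun k => z' k.succ)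
      (mk_succ_castSucc_eq_mk_succ_succ hjump)
    have hsum : ∑ k, dtilde X (z k) (z' k) =
        dtilde X (z 0) (z' 0) + ∑ k : Fin (n + 1), dtilde X (z k.succ) (z' k.succ) :=
      Fin.sum_univ_succ _
    rw [hsum]
    rcases eq_or_mem_gluingImage_of_mk_eq_mk (hjump 0) with hhead | hglued
    · replace hhead : z' 0 = z (Fin.succ 0) := hhead
      rcases htail with hle | ⟨g, hg, hle⟩
      · refine Or.inl ((dtilde_triangle _ (z' 0) _).trans ?_)
        rw [hhead, ← Fin.succ_last]
        gcongr
      · refine Or.inr ⟨g, hg, (chainDist_mk_le_dtilde_add _ (z' 0) _).trans ?_⟩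
        rw [hhead]
        gcongr
    · exact Or.inr ⟨_, hglued, (chainDist_le_dtilde _ _).trans le_self_add⟩

variable {a : Quot (glueRel X E f)} {ρ : ℝ≥0∞}

theorem notMem_gluingImage_of_chainDist_lt
    (hfar : ∀ g ∈ gluingImage X E f, 3 * ρ ≤ chainDist X E f a g) {p : Quot (glueRel X E f)}
    (hp : chainDist X E f a p < ρ) : p ∉ gluingImage X E f := fun hglued =>
  (hp.trans_le (le_mul_of_one_le_left zero_le (by norm_num))).not_ge (hfar p hglued)

theorem min_dtilde_le_chainDist (hfar : ∀ g ∈ gluingImage X E f, 3 * ρ ≤ chainDist X E f a g)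
    {x y : Σ i, X i} (hx : chainDist X E f a (π x) < ρ) (hy : π y ∉ gluingImage X E f) :
    min (dtilde X x y) (2 * ρ) ≤ chainDist X E f (π x) (π y) := by
  refine le_sInf ?_
  rintro _ ⟨n, z, z', hz, hz', hjump, rfl⟩
  obtain rfl := eq_of_mk_eq_mk_of_notMem (notMem_gluingImage_of_chainDist_lt hfar hx) hz
  obtain rfl := eq_of_mk_eq_mk_of_notMem hy hz'
  rcases dtilde_le_sum_or_exists_gluingImage hjump with hle | ⟨g, hglued, hle⟩
  · exact min_le_of_left_le hle
  · refine min_le_of_right_le (not_lt.1 fun hlt => (hfar g hglued).not_gt ?_)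
    calc chainDist X E f a g ≤ chainDist X E f a (π (z 0)) + chainDist X E f (π (z 0)) g :=
          chainDist_triangle _ _ _
      _ < ρ + 2 * ρ := ENNReal.add_lt_add hx (hle.trans_lt hlt)
      _ = 3 * ρ := by ring

theorem chainDist_mk_eq_dtilde (hfar : ∀ g ∈ gluingImage X E f, 3 * ρ ≤ chainDist X E f a g)
    {x y : Σ i, X i} (hx : chainDist X E f a (π x) < ρ) (hy : π y ∉ gluingImage X E f)
    (hxy : dtilde X x y < 2 * ρ) : chainDist X E f (π x) (π y) = dtilde X x y :=
  le_antisymm (chainDist_le_dtilde x y) <| by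
    simpa [min_eq_left hxy.le] using min_dtilde_le_chainDist hfar hx hy

theorem dtilde_lt_of_chainDist_mk_lt {x y : Σ i, X i}
    (hfar : ∀ g ∈ gluingImage X E f, 3 * ρ ≤ chainDist X E f (π x) g) (hρ : 0 < ρ)
    (hxy : chainDist X E f (π x) (π y) < ρ) : dtilde X x y < ρ := by
  have hx : chainDist X E f (π x) (π x) < ρ := (chainDist_self _).trans_lt hρ
  have hmin := (min_dtilde_le_chainDist hfar hx
    (notMem_gluingImage_of_chainDist_lt hfar hxy)).trans_lt hxy
  exact (min_lt_iff.1 hmin).resolve_right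
    (le_mul_of_one_le_left zero_le (by norm_num)).not_gt

end GluedSpace

theorem glued_space_locally_isometric_general
    {I : Type*} (X : Option I → Type*) [∀ i, MetricSpace (X i)]
    (E : I → Set (X none)) (f : ∀ i, E i → X (some i))
    (r : ℝ) (hr : 0 < r) (a : Quot (glueRel X E f)) (za : Σ i, X i)
    (hza : Quot.mk (glueRel X E f) za = a)
    (hfar : ∀ (i : I) (x : X none), x ∈ E i →
      ENNReal.ofReal (3 * r) ≤ chainDist X E f a (Quot.mk (glueRel X E f) ⟨none, x⟩)) :
    ∃ g : {b : Quot (glueRel X E f) // chainDist X E f a b < ENNReal.ofReal r} →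
        Σ i, X i,
      (∀ b, Quot.mk (glueRel X E f) (g b) = b.1) ∧
      (∀ b (z : Σ i, X i), Quot.mk (glueRel X E f) z = b.1 → z = g b) ∧
      (∀ b c, dtilde X (g b) (g c) = chainDist X E f b.1 c.1) ∧
      Set.range g = {z : Σ i, X i | dtilde X za z < ENNReal.ofReal r} := by
  subst hza
  have hfar' : ∀ p ∈ gluingImage X E f, 3 * ENNReal.ofReal r ≤ chainDist X E f (Quot.mk _ za) p := by
    rintro _ ⟨i, x, hx, rfl⟩
    simpa [ENNReal.ofReal_mul] using hfar i x hx
  choose g hg using fun b : {b // chainDist X E f (Quot.mk _ za) b < ENNReal.ofReal r} => Quot.exists_rep b.1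
  have hg_unique : ∀ b z, Quot.mk _ z = b.1 → z = g b := fun b z hz =>
    eq_of_mk_eq_mk_of_notMem (hg b ▸ notMem_gluingImage_of_chainDist_lt hfar' b.2)
      (hz.trans (hg b).symm)
  have hg_ball : ∀ b, dtilde X za (g b) < ENNReal.ofReal r := fun b =>
    dtilde_lt_of_chainDist_mk_lt hfar' (ENNReal.ofReal_pos.2 hr) ((hg b).symm ▸ b.2)
  refine ⟨g, hg, hg_unique, fun b c => ?_, ?_⟩
  · have hbc : dtilde X (g b) (g c) < 2 * ENNReal.ofReal r :=
      calc dtilde X (g b) (g c) ≤ dtilde X za (g b) + dtilde X za (g c) := by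
            simpa only [dtilde_comm (g b) za] using dtilde_triangle (g b) za (g c)
        _ < ENNReal.ofReal r + ENNReal.ofReal r := ENNReal.add_lt_add (hg_ball b) (hg_ball c)
        _ = 2 * ENNReal.ofReal r := (two_mul _).symm
    conv_rhs => rw [← hg b, ← hg c]
    exact (chainDist_mk_eq_dtilde hfar' ((hg b).symm ▸ b.2)
      (hg c ▸ notMem_gluingImage_of_chainDist_lt hfar' c.2) hbc).symm
  · ext z
    refine ⟨by rintro ⟨b, rfl⟩; exact hg_ball b, fun hz => ?_⟩
    have hz_ball : chainDist X E f (Quot.mk _ za) (Quot.mk _ z) < ENNReal.ofReal r :=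
      (chainDist_le_dtilde za z).trans_lt hz
    exact ⟨⟨_, hz_ball⟩, (hg_unique ⟨_, hz_ball⟩ z rfl).symm⟩

/-- In the glued space `(Z,d)`: if `a ∈ Z` is at chain distance at least `3r` from the image
of the gluing sets `⋃ E i`, then every `b` in the ball `B_d(a, r)` has a unique
representative in the disjoint union, and assigning to `b` its representative is a bijective
isometry from `B_d(a,r)` onto `B_{d̃}(z_a, r)`, where `z_a` is the representative of `a`. -/
theorem glued_space_locally_isometric
    {I : Type*} (X : Option I → Type*) [∀ i, MetricSpace (X i)] [∀ i, CompactSpace (X i)]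
    (E : I → Set (X none)) (f : ∀ i, E i → X (some i)) (L : ℝ) (hL : 1 ≤ L)
    (hE : ∀ i, IsCompact (E i) ∧ IsConnected (E i))
    (hdisj : Pairwise (Function.onFun Disjoint E))
    (hf : ∀ i, ∀ x y : E i, dist (x : X none) (y : X none) / L ≤ dist (f i x) (f i y) ∧
      dist (f i x) (f i y) ≤ L * dist (x : X none) (y : X none))
    (r : ℝ) (hr : 0 < r) (a : Quot (glueRel X E f)) (za : Σ i, X i)
    (hza : Quot.mk (glueRel X E f) za = a)
    (hfar : ∀ (i : I) (x : X none), x ∈ E i →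
      ENNReal.ofReal (3 * r) ≤ chainDist X E f a (Quot.mk (glueRel X E f) ⟨none, x⟩)) :
    ∃ g : {b : Quot (glueRel X E f) // chainDist X E f a b < ENNReal.ofReal r} →
        Σ i, X i,
      (∀ b, Quot.mk (glueRel X E f) (g b) = b.1) ∧
      (∀ b (z : Σ i, X i), Quot.mk (glueRel X E f) z = b.1 → z = g b) ∧
      (∀ b c, dtilde X (g b) (g c) = chainDist X E f b.1 c.1) ∧
      Set.range g = {z : Σ i, X i | dtilde X za z < ENNReal.ofReal r} :=
  glued_space_locally_isometric_general X E f r hr a za hza hfar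
end
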